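/- Let k ≥ 2. At every point of ℝ^{2(k+2)} where P_1 ≠ 0 and p_y ≠ 0, the differentials of the k+2 functions H, p_x, p_y, C̃_2,…,C̃_k (where C̃_i := C_i(P_2,…,P_{k+2})) are linearly independent. -/

import Mathlib

/-- The power functions `P_1, …, P_{k+2}` (0-indexed: `powerFn k a` is `P_{a+1}`) on the
phase space `T^* J^k ≅ ℝ^{k+2} × ℝ^{k+2}`.  Configuration coordinates are indexed so that
`q 0 = x`, `q i = u_{k+1-i}` for `1 ≤ i ≤ k`, `q (k+1) = y`, and `p i` is the momentum
conjugate to `q i` (so `p 0 = p_x`, `p 1 = p_k`, …, `p k = p_1`, `p (k+1) = p_y`).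
Then `P_1 = p_x + u_1 p_y + ∑_{i=2}^k u_i p_{i-1} = p 0 + ∑_{j=1}^{k} q j * p (j+1)`,
and `P_m = p (m-1)` for `2 ≤ m ≤ k+2`. -/
noncomputable def powerFn (k : ℕ) (a : Fin (k + 2))
    (z : (Fin (k + 2) → ℝ) × (Fin (k + 2) → ℝ)) : ℝ :=
  if a = ⟨0, by omega⟩ then
    z.2 ⟨0, by omega⟩ + ∑ j : Fin k, z.1 ⟨j.1 + 1, by omega⟩ * z.2 ⟨j.1 + 2, by omega⟩
  else z.2 a

/-- The sub-Riemannian geodesic Hamiltonian `H = (1/2)(P_1² + P_2²)`. -/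
noncomputable def jetHam (k : ℕ) (z : (Fin (k + 2) → ℝ) × (Fin (k + 2) → ℝ)) : ℝ :=
  (1 / 2) * (powerFn k ⟨0, by omega⟩ z ^ 2 + powerFn k ⟨1, by omega⟩ z ^ 2)

/-- The canonical Poisson bracket `{f,g} = ∑_q (∂f/∂q ∂g/∂p_q − ∂f/∂p_q ∂g/∂q)` on
`ℝ^{2(k+2)} = (Fin (k+2) → ℝ) × (Fin (k+2) → ℝ)` (first factor: configuration coordinates,
second factor: conjugate momenta). -/
noncomputable def poissonBracket (k : ℕ)
    (f g : ((Fin (k + 2) → ℝ) × (Fin (k + 2) → ℝ)) → ℝ)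
    (z : (Fin (k + 2) → ℝ) × (Fin (k + 2) → ℝ)) : ℝ :=
  ∑ i : Fin (k + 2),
    (fderiv ℝ f z ((Pi.single i 1 : Fin (k + 2) → ℝ), (0 : Fin (k + 2) → ℝ)) *
        fderiv ℝ g z ((0 : Fin (k + 2) → ℝ), (Pi.single i 1 : Fin (k + 2) → ℝ)) -
      fderiv ℝ f z ((0 : Fin (k + 2) → ℝ), (Pi.single i 1 : Fin (k + 2) → ℝ)) *
        fderiv ℝ g z ((Pi.single i 1 : Fin (k + 2) → ℝ), (0 : Fin (k + 2) → ℝ)))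

/-- The Casimir functions `C_1, …, C_k` of the variables `(P_2, …, P_{k+2})`:
`C_1 = P_{k+2}` and, for `2 ≤ i ≤ k`,
`C_i = P_{k+2}^{i-1} P_{k+2-i} + ∑_{j=1}^{i-2} (−1)^j P_{k+2}^{i-1-j} P_{k+2-i+j} P_{k+1}^j/j!
      + (−1)^{i-1} P_{k+1}^i/((i−2)!·i)`.
Here `P : ℕ → ℝ` records the values of the variables (1-based indexing). -/
noncomputable def casimir (k i : ℕ) (P : ℕ → ℝ) : ℝ :=
  if i = 1 then P (k + 2)
  else
    P (k + 2) ^ (i - 1) * P (k + 2 - i)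
      + ∑ j ∈ Finset.Icc 1 (i - 2),
          (-1 : ℝ) ^ j * P (k + 2) ^ (i - 1 - j) * P (k + 2 - i + j) * P (k + 1) ^ j
            / (Nat.factorial j : ℝ)
      + (-1 : ℝ) ^ (i - 1) * P (k + 1) ^ i / ((Nat.factorial (i - 2) : ℝ) * (i : ℝ))

/-- The values of the power functions `P_1, …, P_{k+2}` at a phase point, with 1-based
indexing (so `phaseVals k z m = P_m(z)` for `1 ≤ m ≤ k+2`, and `0` otherwise). -/
noncomputable def phaseVals (k : ℕ) (z : (Fin (k + 2) → ℝ) × (Fin (k + 2) → ℝ)) : ℕ → ℝ :=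
  fun m => if h : 1 ≤ m ∧ m ≤ k + 2 then powerFn k ⟨m - 1, by omega⟩ z else 0

/-- The `k+2` first integrals: `integralFamily k 0 = H`, `integralFamily k 1 = p_x`,
`integralFamily k 2 = p_y`, and `integralFamily k j = C̃_{j-1} = C_{j-1}(P_2, …, P_{k+2})`
for `3 ≤ j ≤ k+1`. -/
noncomputable def integralFamily (k : ℕ) (j : Fin (k + 2)) :
    ((Fin (k + 2) → ℝ) × (Fin (k + 2) → ℝ)) → ℝ :=
  if j.1 = 0 then jetHam k
  else if j.1 = 1 then fun z => z.2 ⟨0, by omega⟩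
  else if j.1 = 2 then fun z => z.2 ⟨k + 1, by omega⟩
  else fun z => casimir k (j.1 - 1) (phaseVals k z)

/-!
The differentials are triangular with respect to well-chosen test directions. Apart from `H`,
every function depends on the momenta only, and only on `p_m` for `m` at least a pivot index:
`0` for `p_x`, `k+1` for `p_y`, and `k+1-i` for `C̃_i`, in which `P_{k+2-i} = p_{k+1-i}` enters
linearly with coefficient `p_y^{i-1}`. Only `H` depends on `u_1`, with `∂H/∂u_1 = P_1 p_y`.
Taking `H` first and then ordering by pivot index, the derivatives along `∂/∂u_1` and along the
pivot momenta form a triangular matrix with diagonal `P_1 p_y, 1, p_y^{i-1}, 1`, all nonzero.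
-/

open Function

theorem linearIndependent_of_triangular {ι K M β : Type*} [Fintype ι] [Field K]
    [AddCommGroup M] [Module K M] [LinearOrder β]
    (f : ι → M) (ℓ : ι → M →ₗ[K] K) (key : ι → β) (hkey : Injective key)
    (htri : ∀ i j, key i < key j → ℓ i (f j) = 0) (hdiag : ∀ i, ℓ i (f i) ≠ 0) :
    LinearIndependent K f := by
  let _ : LinearOrder ι := LinearOrder.lift' key hkey
  let A : Matrix ι ι K := Matrix.of fun i j => ℓ j (f i)
  have hA : A.IsUpperTriangular := fun i j hji => htri j i hji
  have hdet : A.det ≠ 0 := by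
    rw [Matrix.det_of_isUpperTriangular hA]
    exact Finset.prod_ne_zero_iff.mpr fun i _ => hdiag i
  rw [Fintype.linearIndependent_iff]
  intro c hc
  refine congrFun (Matrix.eq_zero_of_vecMul_eq_zero hdet (funext fun j => ?_))
  simpa [Matrix.vecMul, dotProduct, A, map_sum] using congrArg (ℓ j) hc

section LineDerivative

variable {𝕜 E F : Type*} [NontriviallyNormedField 𝕜]
  [NormedAddCommGroup E] [NormedSpace 𝕜 E] [NormedAddCommGroup F] [NormedSpace 𝕜 F]
  {f : E → F} {x v : E}

theorem fderiv_apply_eq_zero_of_forall_add_smul_eq (h : ∀ t : 𝕜, f (x + t • v) = f x) :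
    fderiv 𝕜 f x v = 0 := by
  by_cases hf : DifferentiableAt 𝕜 f x
  · rw [← hf.lineDeriv_eq_fderiv, lineDeriv, funext h, deriv_const]
  · simp [fderiv_zero_of_not_differentiableAt hf]

theorem DifferentiableAt.fderiv_apply_eq_of_hasLineDerivAt {f' : F}
    (hf : DifferentiableAt 𝕜 f x) (h : HasLineDerivAt 𝕜 f f' x v) : fderiv 𝕜 f x v = f' :=
  hf.lineDeriv_eq_fderiv.symm.trans h.lineDeriv

end LineDerivative

abbrev PhaseSpace (k : ℕ) := (Fin (k + 2) → ℝ) × (Fin (k + 2) → ℝ)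

theorem phaseVals_of_two_le {k n : ℕ} (w : PhaseSpace k) (h2 : 2 ≤ n) (hn : n ≤ k + 2) :
    phaseVals k w n = w.2 ⟨n - 1, by omega⟩ := by
  rw [phaseVals, dif_pos ⟨by omega, hn⟩, powerFn, if_neg (by simp [Fin.ext_iff]; omega)]

theorem phaseVals_of_lt {k n : ℕ} (w : PhaseSpace k) (hn : k + 2 < n) : phaseVals k w n = 0 :=
  dif_neg (by omega)

theorem casimir_congr {k i : ℕ} {P P' : ℕ → ℝ} (hi : i ≠ 0)
    (h : ∀ n, k + 2 - i ≤ n → P n = P' n) : casimir k i P = casimir k i P' := by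
  unfold casimir
  rw [h (k + 2) (by omega), h (k + 2 - i) le_rfl, h (k + 1) (by omega),
    Finset.sum_congr rfl fun j _ => by rw [h (k + 2 - i + j) (by omega)]]

theorem casimir_update_lowest (k : ℕ) {i : ℕ} (P : ℕ → ℝ) (hi : 2 ≤ i) (a : ℝ) :
    casimir k i (update P (k + 2 - i) a)
      = P (k + 2) ^ (i - 1) * a + casimir k i (update P (k + 2 - i) 0) := by
  have hj : ∀ j ∈ Finset.Icc 1 (i - 2), k + 2 - i + j ≠ k + 2 - i := fun j hj => by
    simp only [Finset.mem_Icc] at hj; omega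
  simp +contextual only [casimir, if_neg (show i ≠ 1 by omega), update_self, update_of_ne, hj,
    ne_eq, show k + 2 ≠ k + 2 - i by omega, show k + 1 ≠ k + 2 - i by omega, not_false_eq_true]
  ring

theorem differentiable_powerFn (k : ℕ) (a : Fin (k + 2)) : Differentiable ℝ (powerFn k a) := by
  unfold powerFn; split_ifs <;> fun_prop

theorem differentiable_phaseVals (k n : ℕ) :
    Differentiable ℝ (fun w : PhaseSpace k => phaseVals k w n) := by
  unfold phaseVals; split_ifs
  · exact differentiable_powerFn k _
  · fun_prop

theorem differentiable_casimir_phaseVals (k i : ℕ) :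
    Differentiable ℝ (fun w : PhaseSpace k => casimir k i (phaseVals k w)) := by
  have := differentiable_phaseVals k
  unfold casimir; split_ifs <;> fun_prop

theorem powerFn_zero_add_smul_single (k : ℕ) (hk : 1 ≤ k) (w : PhaseSpace k) (t : ℝ) :
    powerFn k ⟨0, by omega⟩ (w + t • (Pi.single ⟨k, by omega⟩ 1, 0))
      = powerFn k ⟨0, by omega⟩ w + t * w.2 ⟨k + 1, by omega⟩ := by
  simp only [powerFn, if_true, Prod.fst_add, Prod.snd_add, Prod.smul_fst, Prod.smul_snd,
    smul_zero, Pi.zero_apply, add_zero, Pi.add_apply, Pi.smul_apply, smul_eq_mul, add_mul,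
    Finset.sum_add_distrib]
  rw [add_assoc]
  congr 2
  rw [Finset.sum_eq_single ⟨k - 1, by omega⟩]
  · simp [Nat.sub_add_cancel hk, show k - 1 + 2 = k + 1 by omega]
  · intro j _ hj
    rw [Pi.single_eq_of_ne (by simp [Fin.ext_iff] at hj ⊢; omega)]
    ring
  · simp

theorem differentiable_jetHam (k : ℕ) : Differentiable ℝ (jetHam k) := by
  have := differentiable_powerFn k
  unfold jetHam; fun_prop

theorem fderiv_jetHam_apply_single_fst (k : ℕ) (hk : 1 ≤ k) (z : PhaseSpace k) :
    fderiv ℝ (jetHam k) z (Pi.single ⟨k, by omega⟩ 1, 0)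
      = powerFn k ⟨0, by omega⟩ z * z.2 ⟨k + 1, by omega⟩ := by
  refine (differentiable_jetHam k z).fderiv_apply_eq_of_hasLineDerivAt ?_
  set P := powerFn k ⟨0, by omega⟩ z
  set p := z.2 ⟨k + 1, by omega⟩
  have hline : (fun t : ℝ => jetHam k (z + t • (Pi.single ⟨k, by omega⟩ 1, 0)))
      = fun t => 1 / 2 * ((P + t * p) ^ 2 + powerFn k ⟨1, by omega⟩ z ^ 2) := by
    ext t
    have hP2 : powerFn k ⟨1, by omega⟩ (z + t • (Pi.single ⟨k, by omega⟩ 1, 0))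
        = powerFn k ⟨1, by omega⟩ z := by simp [powerFn]
    rw [jetHam, powerFn_zero_add_smul_single k hk, hP2]
  have h := (((((hasDerivAt_id (0 : ℝ)).mul_const p).const_add P).pow 2).add_const
    (powerFn k ⟨1, by omega⟩ z ^ 2)).const_mul (1 / 2 : ℝ)
  rw [HasLineDerivAt, hline]
  exact h.congr_deriv (by simp; ring)

theorem casimir_phaseVals_add_smul_single (k : ℕ) {i : ℕ} (hi2 : 2 ≤ i) (hik : i ≤ k)
    (z : PhaseSpace k) (t : ℝ) :
    casimir k i (phaseVals k (z + t • (0, Pi.single ⟨k + 1 - i, by omega⟩ 1)))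
      = casimir k i (update (phaseVals k z) (k + 2 - i) (z.2 ⟨k + 1 - i, by omega⟩ + t)) := by
  refine casimir_congr (by omega) fun n hn => ?_
  rcases le_or_gt n (k + 2) with hnk | hnk
  · rw [phaseVals_of_two_le _ (by omega) hnk]
    rcases eq_or_ne n (k + 2 - i) with rfl | hne
    · simp [show k + 2 - i - 1 = k + 1 - i by omega]
    · rw [update_of_ne hne, phaseVals_of_two_le _ (by omega) hnk]
      simp [Pi.single_apply, Fin.ext_iff]
      omega
  · rw [phaseVals_of_lt _ hnk, update_of_ne (by omega), phaseVals_of_lt _ hnk]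

theorem fderiv_casimir_apply_single_snd (k : ℕ) {i : ℕ} (hi2 : 2 ≤ i) (hik : i ≤ k)
    (z : PhaseSpace k) :
    fderiv ℝ (fun w => casimir k i (phaseVals k w)) z (0, Pi.single ⟨k + 1 - i, by omega⟩ 1)
      = z.2 ⟨k + 1, by omega⟩ ^ (i - 1) := by
  refine (differentiable_casimir_phaseVals k i z).fderiv_apply_eq_of_hasLineDerivAt ?_
  have hline : (fun t : ℝ => casimir k i
        (phaseVals k (z + t • (0, Pi.single ⟨k + 1 - i, by omega⟩ 1))))
      = fun t => z.2 ⟨k + 1, by omega⟩ ^ (i - 1) * (z.2 ⟨k + 1 - i, by omega⟩ + t)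
          + casimir k i (update (phaseVals k z) (k + 2 - i) 0) := funext fun t => by
    rw [casimir_phaseVals_add_smul_single k hi2 hik, casimir_update_lowest k _ hi2,
      phaseVals_of_two_le z (by omega) le_rfl]
    rfl
  rw [HasLineDerivAt, hline]
  exact (((hasDerivAt_id (0 : ℝ)).const_add _).const_mul _).add_const _ |>.congr_deriv (by simp)

def pivotMomentum (k : ℕ) (j : Fin (k + 2)) : Fin (k + 2) :=
  if j.1 = 1 then ⟨0, by omega⟩
  else if j.1 = 2 then ⟨k + 1, by omega⟩
  else ⟨k + 1 - (j.1 - 1), by omega⟩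

def pivotVector (k : ℕ) (j : Fin (k + 2)) : PhaseSpace k :=
  if j.1 = 0 then (Pi.single ⟨k, by omega⟩ 1, 0) else (0, Pi.single (pivotMomentum k j) 1)

def pivotRank (k : ℕ) (j : Fin (k + 2)) : WithBot (Fin (k + 2)) :=
  if j.1 = 0 then ⊥ else pivotMomentum k j

theorem pivotRank_injective (k : ℕ) : Injective (pivotRank k) := by
  intro a b h
  have := a.2
  have := b.2
  unfold pivotRank pivotMomentum at h
  ext
  split_ifs at h <;> simp [Fin.ext_iff] at h <;> omega

theorem integralFamily_congr {k : ℕ} {j : Fin (k + 2)} (hj : j.1 ≠ 0) {w w' : PhaseSpace k}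
    (h : ∀ m, pivotMomentum k j ≤ m → w.2 m = w'.2 m) :
    integralFamily k j w = integralFamily k j w' := by
  have := j.2
  unfold integralFamily
  rw [if_neg hj]
  split_ifs with h1 h2
  · exact h _ (by simp [pivotMomentum, h1])
  · exact h _ (by simp [pivotMomentum, h2])
  · refine casimir_congr (by omega) fun n hn => ?_
    rcases le_or_gt n (k + 2) with hnk | hnk
    · rw [phaseVals_of_two_le _ (by omega) hnk, phaseVals_of_two_le _ (by omega) hnk]
      exact h _ (by simp [pivotMomentum, h1, h2, Fin.le_def]; omega)
    · rw [phaseVals_of_lt _ hnk, phaseVals_of_lt _ hnk]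

theorem fderiv_momentum_apply_single (k : ℕ) (a : Fin (k + 2)) (z : PhaseSpace k) :
    fderiv ℝ (fun w : PhaseSpace k => w.2 a) z (0, Pi.single a 1) = 1 := by
  have h : HasFDerivAt (fun w : PhaseSpace k => w.2 a) _ z :=
    (hasFDerivAt_apply (𝕜 := ℝ) a z.2).comp z hasFDerivAt_snd
  simp [h.fderiv]

theorem fderiv_integralFamily_pivotVector_eq_zero (k : ℕ) (z : PhaseSpace k)
    {a b : Fin (k + 2)} (hab : pivotRank k a < pivotRank k b) :
    fderiv ℝ (integralFamily k b) z (pivotVector k a) = 0 := by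
  have hb : b.1 ≠ 0 := fun hb => by simp [pivotRank, hb] at hab
  refine fderiv_apply_eq_zero_of_forall_add_smul_eq fun t =>
    integralFamily_congr hb fun m hm => ?_
  unfold pivotVector
  split_ifs with ha
  · simp
  · simp only [pivotRank, ha, hb, if_false, WithBot.coe_lt_coe] at hab
    simp [(hab.trans_le hm).ne']

theorem fderiv_integralFamily_pivotVector_ne_zero (k : ℕ) (hk : 1 ≤ k) (z : PhaseSpace k)
    (h1 : powerFn k ⟨0, by omega⟩ z ≠ 0) (h2 : z.2 ⟨k + 1, by omega⟩ ≠ 0)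
    (j : Fin (k + 2)) :
    fderiv ℝ (integralFamily k j) z (pivotVector k j) ≠ 0 := by
  have := j.2
  unfold integralFamily pivotVector pivotMomentum
  split_ifs with hj0 hj1 hj2
  · rw [fderiv_jetHam_apply_single_fst k hk]
    exact mul_ne_zero h1 h2
  · simp [fderiv_momentum_apply_single]
  · simp [fderiv_momentum_apply_single]
  · rw [fderiv_casimir_apply_single_snd k (by omega) (by omega)]
    exact pow_ne_zero _ h2

/-- at every point where `P_1 ≠ 0` and `p_y ≠ 0`, the differentials of the
`k+2` functions `H`, `p_x`, `p_y`, `C̃_2, …, C̃_k` are linearly independent. -/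
theorem stmt_5 (k : ℕ) (hk : 2 ≤ k)
    (z : (Fin (k + 2) → ℝ) × (Fin (k + 2) → ℝ))
    (h1 : powerFn k ⟨0, by omega⟩ z ≠ 0)
    (h2 : z.2 ⟨k + 1, by omega⟩ ≠ 0) :
    LinearIndependent ℝ (fun j : Fin (k + 2) => fderiv ℝ (integralFamily k j) z) :=
  linearIndependent_of_triangular _
    (fun a => (ContinuousLinearMap.apply ℝ ℝ (pivotVector k a)).toLinearMap)
    (pivotRank k) (pivotRank_injective k)
    (fun _ _ hab => fderiv_integralFamily_pivotVector_eq_zero k z hab)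
    (fderiv_integralFamily_pivotVector_ne_zero k (by omega) z h1 h2)
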